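/- arXiv:2605.02587 — 2 statements merged into one kernel-verified Lean document; each statement's English description precedes it below -/
import Mathlib

section
/- Let Σ be a symmetric positive definite K×K real matrix with condition number κ = λ_max(Σ)/λ_min(Σ). Then for the induced correlation matrix R with entries R_{kk'} = Σ_{kk'}/√(Σ_{kk}Σ_{k'k'}), every off-diagonal entry satisfies |R_{kk'}| ≤ (κ−1)/(κ+1). -/
/-!
Diagonalizing `Σ` gives the Loewner bounds `λ_min • 1 ≤ Σ ≤ λ_max • 1`. Testing them on
`x = e_k / √Σ_kk ± e_k' / √Σ_k'k'`, where the quadratic form is `2 ± 2ρ` (with `ρ = R_kk'`) and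
`x ⬝ᵥ x = s := 1 / Σ_kk + 1 / Σ_k'k'`, yields `λ_min s ≤ 2 - 2|ρ|` and `2 + 2|ρ| ≤ λ_max s`.
Eliminating `s` gives `λ_min (1 + |ρ|) ≤ λ_max (1 - |ρ|)`, i.e. `|ρ| ≤ (κ - 1) / (κ + 1)`.
-/

open Matrix Unitary
open scoped ComplexOrder

lemma le_sub_div_add_of_mul_le_of_le_mul {m M s t : ℝ} (hm : 0 < m) (hmM : m ≤ M)
    (hlo : m * s ≤ 2 - 2 * t) (hhi : 2 + 2 * t ≤ M * s) : t ≤ (M - m) / (M + m) := by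
  rw [le_div_iff₀ (by linarith)]
  nlinarith [mul_le_mul_of_nonneg_left hhi hm.le, mul_le_mul_of_nonneg_left hlo (hm.le.trans hmM)]

namespace Matrix

section Spectrum

variable {n 𝕜 : Type*} [Fintype n] [DecidableEq n] [RCLike 𝕜] {A : Matrix n n 𝕜}

lemma IsHermitian.sub_smul_one_eq (hA : A.IsHermitian) (c : ℝ) :
    A - (c : 𝕜) • 1 = conjStarAlgAut 𝕜 _ hA.eigenvectorUnitary
      (diagonal fun i ↦ ((hA.eigenvalues i - c : ℝ) : 𝕜)) := by
  have hc : (c : 𝕜) • (1 : Matrix n n 𝕜) =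
      conjStarAlgAut 𝕜 _ hA.eigenvectorUnitary ((c : 𝕜) • 1) := by simp
  rw [hc]
  nth_rw 1 [hA.spectral_theorem]
  rw [← map_sub, ← diagonal_one, ← diagonal_smul, diagonal_sub]
  congr 2
  ext i
  simp

lemma IsHermitian.posSemidef_sub_smul_one (hA : A.IsHermitian) {m : ℝ}
    (h : ∀ i, m ≤ hA.eigenvalues i) : (A - (m : 𝕜) • 1).PosSemidef := by
  rw [hA.sub_smul_one_eq, conjStarAlgAut_apply, isUnit_coe.posSemidef_star_right_conjugate_iff,
    posSemidef_diagonal_iff]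
  simpa using h

lemma IsHermitian.posSemidef_smul_one_sub (hA : A.IsHermitian) {M : ℝ}
    (h : ∀ i, hA.eigenvalues i ≤ M) : ((M : 𝕜) • 1 - A).PosSemidef := by
  rw [← neg_sub, hA.sub_smul_one_eq, ← map_neg, diagonal_neg, conjStarAlgAut_apply,
    isUnit_coe.posSemidef_star_right_conjugate_iff, posSemidef_diagonal_iff]
  simpa using h

end Spectrum

section TwoCoordinates

variable {n R : Type*} [Fintype n] [DecidableEq n] [CommRing R] {k l : n}

lemma dotProduct_self_single_add_single (hkl : k ≠ l) (p q : R) :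
    (Pi.single k p + Pi.single l q : n → R) ⬝ᵥ (Pi.single k p + Pi.single l q) =
      p ^ 2 + q ^ 2 := by
  simp [dotProduct_add, Pi.single_eq_of_ne hkl, Pi.single_eq_of_ne hkl.symm, sq]

lemma dotProduct_mulVec_single_add_single (A : Matrix n n R) (p q : R) :
    (Pi.single k p + Pi.single l q : n → R) ⬝ᵥ A *ᵥ (Pi.single k p + Pi.single l q) =
      p ^ 2 * A k k + p * q * (A k l + A l k) + q ^ 2 * A l l := by
  simp [mulVec_add, dotProduct_add, mulVec_single]
  ring

end TwoCoordinates

section Real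

variable {n : Type*} [Fintype n] [DecidableEq n] {A : Matrix n n ℝ}

lemma PosSemidef.mul_dotProduct_self_le {m : ℝ} (h : (A - m • 1).PosSemidef) (x : n → ℝ) :
    m * (x ⬝ᵥ x) ≤ x ⬝ᵥ A *ᵥ x := by
  have := h.dotProduct_mulVec_nonneg x
  simp only [star_trivial, sub_mulVec, smul_mulVec, one_mulVec, dotProduct_sub,
    dotProduct_smul, smul_eq_mul] at this
  linarith

lemma PosSemidef.dotProduct_mulVec_le_mul_dotProduct_self {M : ℝ}
    (h : (M • 1 - A).PosSemidef) (x : n → ℝ) : x ⬝ᵥ A *ᵥ x ≤ M * (x ⬝ᵥ x) := by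
  have := h.dotProduct_mulVec_nonneg x
  simp only [star_trivial, sub_mulVec, smul_mulVec, one_mulVec, dotProduct_sub,
    dotProduct_smul, smul_eq_mul] at this
  linarith

lemma abs_correlation_le {m M : ℝ} (hm : 0 < m) (hlo : (A - m • 1).PosSemidef)
    (hhi : (M • 1 - A).PosSemidef) {k l : n} (hkl : k ≠ l) :
    |A k l / √(A k k * A l l)| ≤ (M - m) / (M + m) := by
  have hsym : A l k = A k l := by
    simpa [one_apply_ne hkl, one_apply_ne hkl.symm] using (hlo.isHermitian.apply l k).symm
  have quad (p q : ℝ) :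
      m * (p ^ 2 + q ^ 2) ≤ p ^ 2 * A k k + 2 * p * q * A k l + q ^ 2 * A l l ∧
        p ^ 2 * A k k + 2 * p * q * A k l + q ^ 2 * A l l ≤ M * (p ^ 2 + q ^ 2) := by
    have hx := dotProduct_self_single_add_single hkl p q
    have hq := dotProduct_mulVec_single_add_single A (k := k) (l := l) p q
    rw [hsym] at hq
    constructor
    · have := hlo.mul_dotProduct_self_le (Pi.single k p + Pi.single l q)
      rw [hx, hq] at this
      linarith
    · have := hhi.dotProduct_mulVec_le_mul_dotProduct_self (Pi.single k p + Pi.single l q)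
      rw [hx, hq] at this
      linarith
  obtain ⟨hma, haM⟩ : m ≤ A k k ∧ A k k ≤ M := by simpa using quad 1 0
  have ha : 0 < A k k := hm.trans_le hma
  have hb : 0 < A l l := hm.trans_le (by simpa using (quad 0 1).1)
  set ρ := A k l / √(A k k * A l l) with hρ
  set s := 1 / A k k + 1 / A l l
  have bounds (ε : ℝ) (hε : ε ^ 2 = 1) : m * s ≤ 2 + 2 * ε * ρ ∧ 2 + 2 * ε * ρ ≤ M * s := by
    have hp : (1 / √(A k k)) ^ 2 = 1 / A k k := by rw [div_pow, Real.sq_sqrt ha.le, one_pow]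
    have hq : (ε / √(A l l)) ^ 2 = 1 / A l l := by rw [div_pow, Real.sq_sqrt hb.le, hε]
    have hpq : 2 * (1 / √(A k k)) * (ε / √(A l l)) * A k l = 2 * ε * ρ := by
      rw [hρ, Real.sqrt_mul ha.le]; ring
    have := quad (1 / √(A k k)) (ε / √(A l l))
    rw [hp, hq, hpq, div_mul_cancel₀ 1 ha.ne', div_mul_cancel₀ 1 hb.ne'] at this
    constructor <;> linarith [this.1, this.2]
  obtain ⟨hlo_pos, hhi_pos⟩ := bounds 1 (one_pow 2)
  obtain ⟨hlo_neg, hhi_neg⟩ := bounds (-1) (by norm_num)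
  refine abs_le.mpr ⟨neg_le.mpr ?_, ?_⟩ <;>
    refine le_sub_div_add_of_mul_le_of_le_mul (s := s) hm (hma.trans haM) ?_ ?_ <;> linarith

end Real

end Matrix

/-- For a symmetric positive definite matrix `A`, every off-diagonal entry of the
induced correlation matrix is bounded by `(κ-1)/(κ+1)` where `κ = λmax/λmin`. -/
theorem stmt0 {K : ℕ} (A : Matrix (Fin K) (Fin K) ℝ) (hA : A.PosDef)
    (lmax lmin : ℝ)
    (hmax : IsGreatest (Set.range hA.1.eigenvalues) lmax)
    (hmin : IsLeast (Set.range hA.1.eigenvalues) lmin)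
    (k k' : Fin K) (hkk' : k ≠ k') :
    |A k k' / Real.sqrt (A k k * A k' k')| ≤ (lmax / lmin - 1) / (lmax / lmin + 1) := by
  have hlmin : 0 < lmin := by
    obtain ⟨i, rfl⟩ := hmin.1
    exact hA.eigenvalues_pos i
  have hlo : (A - lmin • 1).PosSemidef := by
    simpa using hA.1.posSemidef_sub_smul_one fun i ↦ hmin.2 ⟨i, rfl⟩
  have hhi : (lmax • 1 - A).PosSemidef := by
    simpa using hA.1.posSemidef_smul_one_sub fun i ↦ hmax.2 ⟨i, rfl⟩
  rw [div_sub_one hlmin.ne', div_add_one hlmin.ne', div_div_div_cancel_right₀ hlmin.ne']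
  exact abs_correlation_le hlmin hlo hhi hkk'
end

section
/- Let U be Haar-distributed on the orthogonal group O(K), Λ = diag(λ_1,...,λ_K) independent of U with λ_i i.i.d. Inverse-Gamma(ν−1, 1/2), ν > 3, and Σ = UΛU^T. Then for k ≠ k', E[Σ_{kk'} (Σ^{-1})_{kk'}] = −1/((ν−2)(K+2)). -/
/-! Since `U` is orthogonal and the `λ_i` are a.s. positive, `Σ⁻¹ = UΛ⁻¹Uᵀ`, so
`Σ_{kk'} (Σ⁻¹)_{kk'} = ∑_{i,j} U_{ki}U_{k'i}U_{kj}U_{k'j} · λ_i/λ_j`.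
By the independence of `U` and `Λ` each term factors into a fourth moment of `U` times
`E[λ_i/λ_j]`, which is `1` for `i = j` and `E[λ] E[λ⁻¹] = (ν-1)/(ν-2)` otherwise. Summing,
`K · 1/(K(K+2)) − K(K-1) · 1/(K(K-1)(K+2)) · (ν-1)/(ν-2) = −1/((ν-2)(K+2))`. -/

open MeasureTheory ProbabilityTheory Matrix

noncomputable def invGammaMeasure (α β : ℝ) : Measure ℝ :=
  (volume.restrict (Set.Ioi (0 : ℝ))).withDensity
    (fun x => ENNReal.ofReal
      (β ^ α / Real.Gamma α * x ^ (-(α + 1)) * Real.exp (-β / x)))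

instance {K : ℕ} : MeasurableSpace (Matrix (Fin K) (Fin K) ℝ) :=
  inferInstanceAs (MeasurableSpace (Fin K → Fin K → ℝ))

open Set Real

lemma integral_rpow_neg_sub_one_mul_exp_neg_div_Ioi {s β : ℝ} (hs : 0 < s) (hβ : 0 < β) :
    ∫ x in Ioi (0 : ℝ), x ^ (-s - 1) * exp (-β / x) = (1 / β) ^ s * Gamma s := by
  rw [← integral_rpow_mul_exp_neg_mul_Ioi hs hβ,
    ← integral_comp_rpow_Ioi (fun t => t ^ (s - 1) * exp (-(β * t)))
      (by norm_num : (-1 : ℝ) ≠ 0)]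
  refine setIntegral_congr_fun measurableSet_Ioi fun x (hx : 0 < x) => ?_
  rw [smul_eq_mul, ← rpow_mul hx.le, rpow_neg_one, abs_neg, abs_one, one_mul, ← mul_assoc,
    ← rpow_add hx]
  congr 2 <;> ring

lemma invGammaMeasure_ae_pos (α β : ℝ) : ∀ᵐ x ∂invGammaMeasure α β, 0 < x :=
  (withDensity_absolutelyContinuous _ _).ae_le (ae_restrict_mem measurableSet_Ioi)

lemma integral_rpow_invGammaMeasure {α β r : ℝ} (hα : 0 < α) (hβ : 0 < β) (hr : r < α) :
    ∫ x, x ^ r ∂invGammaMeasure α β = β ^ r * Gamma (α - r) / Gamma α := by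
  have hdens : Measurable fun x : ℝ => β ^ α / Gamma α * x ^ (-(α + 1)) * exp (-β / x) := by
    fun_prop
  rw [invGammaMeasure, integral_withDensity_eq_integral_toReal_smul hdens.ennreal_ofReal
    (ae_of_all _ fun _ => ENNReal.ofReal_lt_top)]
  calc _ = ∫ x in Ioi 0, β ^ α / Gamma α * (x ^ (-(α - r) - 1) * exp (-β / x)) := by
        refine setIntegral_congr_fun measurableSet_Ioi fun x (hx : 0 < x) => ?_
        rw [ENNReal.toReal_ofReal (by positivity), smul_eq_mul,
          show -(α - r) - 1 = -(α + 1) + r by ring, rpow_add hx]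
        ring
    _ = β ^ r * Gamma (α - r) / Gamma α := by
        rw [integral_const_mul, integral_rpow_neg_sub_one_mul_exp_neg_div_Ioi (by linarith) hβ,
          div_rpow zero_le_one hβ.le, one_rpow]
        have hβr : β ^ r = β ^ α / β ^ (α - r) := by rw [← rpow_sub hβ]; ring_nf
        rw [hβr]
        field_simp

lemma integral_id_invGammaMeasure {α β : ℝ} (hα : 1 < α) (hβ : 0 < β) :
    ∫ x, x ∂invGammaMeasure α β = β / (α - 1) := by
  have h := integral_rpow_invGammaMeasure (by linarith) hβ (r := 1) hα
  have hΓ : Gamma α = (α - 1) * Gamma (α - 1) := by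
    simpa using Gamma_add_one (s := α - 1) (by linarith)
  simp only [rpow_one, hΓ] at h
  rw [h]
  field_simp [(Gamma_pos_of_pos (sub_pos.2 hα)).ne']

lemma integral_inv_invGammaMeasure {α β : ℝ} (hα : 0 < α) (hβ : 0 < β) :
    ∫ x, x⁻¹ ∂invGammaMeasure α β = α / β := by
  have h := integral_rpow_invGammaMeasure hα hβ (r := -1) (by linarith)
  simp only [rpow_neg_one, sub_neg_eq_add, Gamma_add_one hα.ne'] at h
  rw [h]
  field_simp [(Gamma_pos_of_pos hα).ne']

section Law

variable {Ω : Type*} [MeasurableSpace Ω] {P : Measure Ω} {X : Ω → ℝ} {α β : ℝ}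

lemma ae_pos_of_map_eq_invGammaMeasure (hX : AEMeasurable X P)
    (hlaw : P.map X = invGammaMeasure α β) : ∀ᵐ ω ∂P, 0 < X ω :=
  ae_of_ae_map hX (hlaw ▸ invGammaMeasure_ae_pos α β)

lemma integral_of_map_eq_invGammaMeasure (hX : AEMeasurable X P)
    (hlaw : P.map X = invGammaMeasure α β) (hα : 1 < α) (hβ : 0 < β) :
    ∫ ω, X ω ∂P = β / (α - 1) := by
  rw [← integral_id_invGammaMeasure hα hβ, ← hlaw]
  exact (integral_map hX aestronglyMeasurable_id).symm

lemma integral_inv_of_map_eq_invGammaMeasure (hX : AEMeasurable X P)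
    (hlaw : P.map X = invGammaMeasure α β) (hα : 0 < α) (hβ : 0 < β) :
    ∫ ω, (X ω)⁻¹ ∂P = α / β := by
  rw [← integral_inv_invGammaMeasure hα hβ, ← hlaw,
    integral_map hX measurable_inv.aestronglyMeasurable]

lemma integral_mul_inv_of_iIndepFun [IsProbabilityMeasure P] {ι : Type*} [DecidableEq ι]
    {l : ι → Ω → ℝ} (hl : ∀ i, Measurable (l i)) (hiid : iIndepFun l P)
    (hlaw : ∀ i, P.map (l i) = invGammaMeasure α β) (hα : 1 < α) (hβ : 0 < β) (i j : ι) :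
    ∫ ω, l i ω * (l j ω)⁻¹ ∂P = if i = j then 1 else α / (α - 1) := by
  split_ifs with hij
  · subst hij
    have h1 : (fun ω => l i ω * (l i ω)⁻¹) =ᵐ[P] fun _ => 1 := by
      filter_upwards [ae_pos_of_map_eq_invGammaMeasure (hl i).aemeasurable (hlaw i)] with ω hω
      exact mul_inv_cancel₀ hω.ne'
    simp [integral_congr_ae h1]
  · have hind : IndepFun (l i) (fun ω => (l j ω)⁻¹) P :=
      (hiid.indepFun hij).comp measurable_id measurable_inv
    rw [hind.integral_fun_mul_eq_mul_integral (hl i).aestronglyMeasurable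
        (hl j).inv.aestronglyMeasurable,
      integral_of_map_eq_invGammaMeasure (hl i).aemeasurable (hlaw i) hα hβ,
      integral_inv_of_map_eq_invGammaMeasure (hl j).aemeasurable (hlaw j) (by linarith) hβ]
    field_simp

lemma integrable_mul_inv_of_iIndepFun [IsProbabilityMeasure P] {ι : Type*} [DecidableEq ι]
    {l : ι → Ω → ℝ} (hl : ∀ i, Measurable (l i)) (hiid : iIndepFun l P)
    (hlaw : ∀ i, P.map (l i) = invGammaMeasure α β) (hα : 1 < α) (hβ : 0 < β) (i j : ι) :
    Integrable (fun ω => l i ω * (l j ω)⁻¹) P := by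
  refine .of_integral_ne_zero ?_
  rw [integral_mul_inv_of_iIndepFun hl hiid hlaw hα hβ]
  split_ifs
  exacts [one_ne_zero, div_ne_zero (by linarith) (by linarith)]

end Law

section Matrix

variable {n R : Type*} [Fintype n] [DecidableEq n]

lemma Matrix.mul_diagonal_mul_transpose_apply [CommSemiring R] (U : Matrix n n R) (d : n → R)
    (a b : n) : (U * diagonal d * Uᵀ) a b = ∑ i, U a i * d i * U b i := by
  simp [mul_apply, diagonal_apply, transpose_apply]

lemma Matrix.inv_mul_diagonal_mul_transpose [Field R] {U : Matrix n n R} (hU : Uᵀ * U = 1)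
    {d : n → R} (hd : ∀ i, d i ≠ 0) :
    (U * diagonal d * Uᵀ)⁻¹ = U * diagonal d⁻¹ * Uᵀ := by
  refine inv_eq_left_inv ?_
  have hd' : (fun i => d⁻¹ i * d i) = fun _ => 1 := funext fun i => inv_mul_cancel₀ (hd i)
  calc U * diagonal d⁻¹ * Uᵀ * (U * diagonal d * Uᵀ)
      = U * (diagonal d⁻¹ * (Uᵀ * U) * diagonal d) * Uᵀ := by simp only [Matrix.mul_assoc]
    _ = 1 := by
      rw [hU, Matrix.mul_one, diagonal_mul_diagonal, hd', diagonal_one, Matrix.mul_one,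
        mul_eq_one_comm.mp hU]

lemma Matrix.mul_diagonal_mul_transpose_apply_mul_inv_apply [Field R] {U : Matrix n n R}
    (hU : Uᵀ * U = 1) {d : n → R} (hd : ∀ i, d i ≠ 0) (a b : n) :
    (U * diagonal d * Uᵀ) a b * (U * diagonal d * Uᵀ)⁻¹ a b
      = ∑ i, ∑ j, U a i * U b i * U a j * U b j * (d i * (d j)⁻¹) := by
  rw [inv_mul_diagonal_mul_transpose hU hd, mul_diagonal_mul_transpose_apply,
    mul_diagonal_mul_transpose_apply, Finset.sum_mul_sum]
  refine Finset.sum_congr rfl fun i _ => Finset.sum_congr rfl fun j _ => ?_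
  simp only [Pi.inv_apply]
  ring

end Matrix

lemma Finset.sum_sum_ite_eq {ι R : Type*} [Fintype ι] [DecidableEq ι] [CommRing R] (a b : R) :
    ∑ i : ι, ∑ j : ι, (if i = j then a else b)
      = Fintype.card ι * a + Fintype.card ι * (Fintype.card ι - 1) * b := by
  have h : ∀ i : ι, ∑ j : ι, (if i = j then a else b) = a + (Fintype.card ι - 1) * b := by
    intro i
    rw [← Finset.add_sum_erase _ _ (Finset.mem_univ i), if_pos rfl,
      Finset.sum_congr rfl fun j hj => if_neg (Finset.ne_of_mem_erase hj).symm,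
      Finset.sum_const, Finset.card_erase_of_mem (Finset.mem_univ i), Finset.card_univ,
      nsmul_eq_mul, Nat.cast_pred (Fintype.card_pos_iff.2 ⟨i⟩)]
  simp only [h, Finset.sum_const, Finset.card_univ, nsmul_eq_mul]
  ring

lemma integral_mul_diagonal_mul_transpose_apply_mul_inv_apply {Ω : Type*} [MeasurableSpace Ω]
    {P : Measure Ω} {K : ℕ} {U : Ω → Matrix (Fin K) (Fin K) ℝ} {l : Fin K → Ω → ℝ}
    (hindep : IndepFun U (fun ω i => l i ω) P) (horth : ∀ᵐ ω ∂P, (U ω)ᵀ * U ω = 1)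
    (hl : ∀ i, ∀ᵐ ω ∂P, l i ω ≠ 0) {a b : Fin K}
    (hUint : ∀ i j, Integrable (fun ω => U ω a i * U ω b i * U ω a j * U ω b j) P)
    (hlint : ∀ i j, Integrable (fun ω => l i ω * (l j ω)⁻¹) P) :
    ∫ ω, (U ω * diagonal (fun i => l i ω) * (U ω)ᵀ) a b
        * (U ω * diagonal (fun i => l i ω) * (U ω)ᵀ)⁻¹ a b ∂P
      = ∑ i, ∑ j, (∫ ω, U ω a i * U ω b i * U ω a j * U ω b j ∂P)
          * ∫ ω, l i ω * (l j ω)⁻¹ ∂P := by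
  have hind : ∀ i j, IndepFun (fun ω => U ω a i * U ω b i * U ω a j * U ω b j)
      (fun ω => l i ω * (l j ω)⁻¹) P := fun i j =>
    hindep.comp (φ := fun M : Matrix (Fin K) (Fin K) ℝ => M a i * M b i * M a j * M b j)
      (ψ := fun v : Fin K → ℝ => v i * (v j)⁻¹)
      (by fun_prop) (by fun_prop)
  have hint : ∀ i j, Integrable (fun ω =>
      U ω a i * U ω b i * U ω a j * U ω b j * (l i ω * (l j ω)⁻¹)) P := fun i j =>
    (hind i j).integrable_mul (hUint i j) (hlint i j)
  rw [integral_congr_ae (by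
      filter_upwards [horth, ae_all_iff.2 hl] with ω hU hl
      exact mul_diagonal_mul_transpose_apply_mul_inv_apply hU hl a b),
    integral_finsetSum _ fun i _ => integrable_finsetSum _ fun j _ => hint i j]
  refine Finset.sum_congr rfl fun i _ => ?_
  rw [integral_finsetSum _ fun j _ => hint i j]
  exact Finset.sum_congr rfl fun j _ =>
    (hind i j).integral_fun_mul_eq_mul_integral (hUint i j).1 (hlint i j).1

theorem stmt12_general {Ω : Type*} [MeasurableSpace Ω] (P : Measure Ω)
    [IsProbabilityMeasure P] {K : ℕ} (hK : 2 ≤ K) (ν : ℝ) (hν : 3 < ν)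
    (U : Ω → Matrix (Fin K) (Fin K) ℝ)
    (l : Fin K → Ω → ℝ) (hl : ∀ i, Measurable (l i))
    (hindep : IndepFun U (fun ω => fun i => l i ω) P)
    (hiid : iIndepFun l P)
    (hdist : ∀ i, P.map (l i) = invGammaMeasure (ν - 1) (1 / 2))
    (horth : ∀ᵐ ω ∂P, (U ω)ᵀ * U ω = 1)
    (k k' : Fin K)
    (h4a : ∀ i, ∫ ω, (U ω k i) ^ 2 * (U ω k' i) ^ 2 ∂P
      = 1 / ((K : ℝ) * ((K : ℝ) + 2)))
    (h4b : ∀ i j, i ≠ j →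
      ∫ ω, U ω k i * U ω k' i * U ω k j * U ω k' j ∂P
        = -(1 / ((K : ℝ) * ((K : ℝ) - 1) * ((K : ℝ) + 2))))
    (S : Ω → Matrix (Fin K) (Fin K) ℝ)
    (hS : ∀ ω, S ω = U ω * Matrix.diagonal (fun i => l i ω) * (U ω)ᵀ) :
    ∫ ω, S ω k k' * (S ω)⁻¹ k k' ∂P = -(1 / ((ν - 2) * ((K : ℝ) + 2))) := by
  have hK1 : (1 : ℝ) < K := by exact_mod_cast hK
  let A : ℝ := 1 / ((K : ℝ) * ((K : ℝ) + 2))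
  let B : ℝ := -(1 / ((K : ℝ) * ((K : ℝ) - 1) * ((K : ℝ) + 2)))
  have hmoment : ∀ i j,
      ∫ ω, U ω k i * U ω k' i * U ω k j * U ω k' j ∂P = if i = j then A else B := by
    intro i j
    split_ifs with hij
    · subst hij
      exact (integral_congr_ae (ae_of_all _ fun ω => by ring)).trans (h4a i)
    · exact h4b i j hij
  have hratio := integral_mul_inv_of_iIndepFun hl hiid hdist (by linarith)
    (by norm_num : (0 : ℝ) < 1 / 2)
  have hmoment_ne : ∀ i j : Fin K, (if i = j then A else B) ≠ 0 := by
    intro i j; split_ifs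
    exacts [one_div_ne_zero (mul_ne_zero (by linarith) (by linarith)),
      neg_ne_zero.2 (one_div_ne_zero (mul_ne_zero (mul_ne_zero (by linarith) (by linarith))
        (by linarith)))]
  simp_rw [hS]
  rw [integral_mul_diagonal_mul_transpose_apply_mul_inv_apply hindep horth
    (fun i => (ae_pos_of_map_eq_invGammaMeasure (hl i).aemeasurable (hdist i)).mono
      fun _ h => h.ne')
    -- the prescribed fourth moments are nonzero, which forces integrability
    (fun i j => .of_integral_ne_zero (hmoment i j ▸ hmoment_ne i j))
    (integrable_mul_inv_of_iIndepFun hl hiid hdist (by linarith) (by norm_num))]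
  calc _ = ∑ i : Fin K, ∑ j : Fin K, if i = j then A else B * ((ν - 1) / (ν - 1 - 1)) := by
        simp only [hmoment, hratio]
        exact Finset.sum_congr rfl fun i _ => Finset.sum_congr rfl fun j _ => by split_ifs <;> ring
    _ = K * A + K * (K - 1) * (B * ((ν - 1) / (ν - 1 - 1))) := by
        rw [Finset.sum_sum_ite_eq, Fintype.card_fin]
    _ = -(1 / ((ν - 2) * ((K : ℝ) + 2))) := by
        have : ν - 1 - 1 ≠ 0 := by linarith
        have : ν - 2 ≠ 0 := by linarith
        have : (K : ℝ) - 1 ≠ 0 := by linarith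
        simp only [A, B]
        field_simp
        ring

/-- For `Σ = UΛUᵀ` with `U` Haar on `O(K)` (expressed through its almost-sure
orthogonality and its fourth-moment identities) independent of
`Λ = diag(λ_1,...,λ_K)` with `λ_i` i.i.d. Inverse-Gamma(ν−1, 1/2), `ν > 3`:
`E[Σ_{kk'}(Σ⁻¹)_{kk'}] = −1/((ν−2)(K+2))` for `k ≠ k'`. -/
theorem stmt12 {Ω : Type*} [MeasurableSpace Ω] (P : Measure Ω)
    [IsProbabilityMeasure P] {K : ℕ} (hK : 2 ≤ K) (ν : ℝ) (hν : 3 < ν)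
    (U : Ω → Matrix (Fin K) (Fin K) ℝ) (hU : Measurable U)
    (l : Fin K → Ω → ℝ) (hl : ∀ i, Measurable (l i))
    (hindep : IndepFun U (fun ω => fun i => l i ω) P)
    (hiid : iIndepFun l P)
    (hdist : ∀ i, P.map (l i) = invGammaMeasure (ν - 1) (1 / 2))
    (horth : ∀ᵐ ω ∂P, (U ω)ᵀ * U ω = 1)
    (k k' : Fin K) (hkk' : k ≠ k')
    (h4a : ∀ i, ∫ ω, (U ω k i) ^ 2 * (U ω k' i) ^ 2 ∂P
      = 1 / ((K : ℝ) * ((K : ℝ) + 2)))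
    (h4b : ∀ i j, i ≠ j →
      ∫ ω, U ω k i * U ω k' i * U ω k j * U ω k' j ∂P
        = -(1 / ((K : ℝ) * ((K : ℝ) - 1) * ((K : ℝ) + 2))))
    (S : Ω → Matrix (Fin K) (Fin K) ℝ)
    (hS : ∀ ω, S ω = U ω * Matrix.diagonal (fun i => l i ω) * (U ω)ᵀ) :
    ∫ ω, S ω k k' * (S ω)⁻¹ k k' ∂P = -(1 / ((ν - 2) * ((K : ℝ) + 2))) :=
  stmt12_general P hK ν hν U l hl hindep hiid hdist horth k k' h4a h4b S hS
end
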